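/- (Theorem 2(ii): the representational maximum correlation is the maximum over z of the conditional maximum correlation.) Assume X has at least two elements and Y has at least two elements. Define ρ_s² = sSup { B(f) : f : X × Z → ℝ with ∑_x p(x) q(x,z) f(x,z) = 0 for every z and A(f) = 1 }. For each z define the conditional distributions p(x|z) = p(x) q(x,z) / p(z), p(y|z) = p(y,z) / p(z), p(x,y|z) = p(x,y) q(x,z) / p(z), and the conditional maximum correlation ρ_m(z) = sSup { ∑_{x,y} p(x,y|z) f(x) g(y) : f : X → ℝ, g : Y → ℝ, ∑_x p(x|z) f(x) = 0, ∑_x p(x|z) f(x)² = 1, ∑_y p(y|z) g(y) = 0, ∑_y p(y|z) g(y)² = 1 }. Then ρ_s² = max over z ∈ Z of ρ_m(z)². -/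

import Mathlib

open Finset Filter Matrix

variable {X Y Z : Type*} [Fintype X] [Fintype Y] [Fintype Z]

/-- marginal p(x) = ∑_y p(x,y) -/
noncomputable def pX (p : X → Y → ℝ) (x : X) : ℝ := ∑ y, p x y

/-- marginal p(y) = ∑_x p(x,y) -/
noncomputable def pY (p : X → Y → ℝ) (y : Y) : ℝ := ∑ x, p x y

/-- marginal p(z) = ∑_x p(x) q(x,z) -/
noncomputable def pZ (p : X → Y → ℝ) (q : X → Z → ℝ) (z : Z) : ℝ := ∑ x, pX p x * q x z

/-- joint p(y,z) = ∑_x p(x,y) q(x,z) -/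
noncomputable def pYZ (p : X → Y → ℝ) (q : X → Z → ℝ) (y : Y) (z : Z) : ℝ := ∑ x, p x y * q x z

/-- A(r) = ∑_{x,z} p(x) q(x,z) r(x,z)² -/
noncomputable def termA (p : X → Y → ℝ) (q : X → Z → ℝ) (r : X → Z → ℝ) : ℝ :=
  ∑ x, ∑ z, pX p x * q x z * r x z ^ 2

/-- C(r) = ∑_z (∑_x p(x) q(x,z) r(x,z))² / p(z) -/
noncomputable def termC (p : X → Y → ℝ) (q : X → Z → ℝ) (r : X → Z → ℝ) : ℝ :=
  ∑ z, (∑ x, pX p x * q x z * r x z) ^ 2 / pZ p q z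

/-- B(r) = ∑_{y,z} (∑_x p(x,y) q(x,z) r(x,z))² / p(y,z) -/
noncomputable def termB (p : X → Y → ℝ) (q : X → Z → ℝ) (r : X → Z → ℝ) : ℝ :=
  ∑ y, ∑ z, (∑ x, p x y * q x z * r x z) ^ 2 / pYZ p q y z

/-- r̄(z) = (∑_x p(x) q(x,z) r(x,z)) / p(z) -/
noncomputable def rbarZ (p : X → Y → ℝ) (q : X → Z → ℝ) (r : X → Z → ℝ) (z : Z) : ℝ :=
  (∑ x, pX p x * q x z * r x z) / pZ p q z

/-- r̄(y,z) = (∑_x p(x,y) q(x,z) r(x,z)) / p(y,z) -/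
noncomputable def rbarYZ (p : X → Y → ℝ) (q : X → Z → ℝ) (r : X → Z → ℝ) (y : Y) (z : Z) : ℝ :=
  (∑ x, p x y * q x z * r x z) / pYZ p q y z

/-- ρ_s² : the one-function form of the representational maximum correlation squared -/
noncomputable def rhoS2 (p : X → Y → ℝ) (q : X → Z → ℝ) : ℝ :=
  sSup {b : ℝ | ∃ f : X → Z → ℝ,
    (∀ z, ∑ x, pX p x * q x z * f x z = 0) ∧ termA p q f = 1 ∧ b = termB p q f}

/-- conditional distribution p(x|z) -/
noncomputable def pXgZ (p : X → Y → ℝ) (q : X → Z → ℝ) (x : X) (z : Z) : ℝ :=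
  pX p x * q x z / pZ p q z

/-- conditional distribution p(y|z) -/
noncomputable def pYgZ (p : X → Y → ℝ) (q : X → Z → ℝ) (y : Y) (z : Z) : ℝ :=
  pYZ p q y z / pZ p q z

/-- conditional distribution p(x,y|z) -/
noncomputable def pXYgZ (p : X → Y → ℝ) (q : X → Z → ℝ) (x : X) (y : Y) (z : Z) : ℝ :=
  p x y * q x z / pZ p q z

/-- conditional maximum correlation ρ_m(X,Y|Z=z) -/
noncomputable def rhoM (p : X → Y → ℝ) (q : X → Z → ℝ) (z : Z) : ℝ :=
  sSup {c : ℝ | ∃ f : X → ℝ, ∃ g : Y → ℝ,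
    (∑ x, pXgZ p q x z * f x = 0) ∧ (∑ x, pXgZ p q x z * f x ^ 2 = 1) ∧
    (∑ y, pYgZ p q y z * g y = 0) ∧ (∑ y, pYgZ p q y z * g y ^ 2 = 1) ∧
    c = ∑ x, ∑ y, pXYgZ p q x y z * f x * g y}

/-!
For each `z`, `ρ_m(z)²` is the best constant in `‖E[f(X) | Y, Z = z]‖² ≤ ρ_m(z)² ‖f‖²` over
`f` of conditional mean zero: Cauchy–Schwarz gives `corr(f, g)² ≤ ‖E[f | Y, Z = z]‖² ‖g‖²`, and
`g = E[f | Y, Z = z]` attains it. Both `A` and `B` split over `z` with weights `p(z)`: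
`A(f) = ∑_z p(z) ‖f(·, z)‖²` and `B(f) = ∑_z p(z) ‖E[f(·, z) | Y, Z = z]‖²`, the norms taken in
the conditional laws given `Z = z`. Hence `B ≤ (max_z ρ_m(z)²) A`, and `f` concentrated on a
single slice `z` recovers every conditional correlation at `z`.
-/

lemma sSup_sq_le_of_forall_sq_le {S : Set ℝ} {r : ℝ} (hS : 0 ≤ sSup S) (hr : 0 ≤ r)
    (h : ∀ c ∈ S, c ^ 2 ≤ r) : sSup S ^ 2 ≤ r :=
  (Real.le_sqrt hS hr).mp <| Real.sSup_le
    (fun c hc => (le_abs_self c).trans (Real.abs_le_sqrt (h c hc))) (Real.sqrt_nonneg r)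

lemma sq_sum_mul_mul_le {ι : Type*} [Fintype ι] {w : ι → ℝ} (hw : ∀ i, 0 ≤ w i) (f g : ι → ℝ) :
    (∑ i, w i * f i * g i) ^ 2 ≤ (∑ i, w i * f i ^ 2) * ∑ i, w i * g i ^ 2 :=
  sum_sq_le_sum_mul_sum_of_sq_le_mul _ (fun i _ => mul_nonneg (hw i) (sq_nonneg _))
    (fun i _ => mul_nonneg (hw i) (sq_nonneg _)) fun i _ => le_of_eq (by ring)

section Correlation

/-! Throughout, `w` is a joint weight on `X × Y` with marginals `a` and `b`, `condExp b w f y`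
is the conditional expectation `E[f(X) | Y = y]` and `condExpNormSq b w f` its squared
`L²(b)`-norm. -/

variable {a : X → ℝ} {b : Y → ℝ} {w : X → Y → ℝ}

def correlations (a : X → ℝ) (b : Y → ℝ) (w : X → Y → ℝ) : Set ℝ :=
  {c | ∃ f : X → ℝ, ∃ g : Y → ℝ,
    (∑ x, a x * f x = 0) ∧ (∑ x, a x * f x ^ 2 = 1) ∧
    (∑ y, b y * g y = 0) ∧ (∑ y, b y * g y ^ 2 = 1) ∧
    c = ∑ x, ∑ y, w x y * f x * g y}

noncomputable def condExp (b : Y → ℝ) (w : X → Y → ℝ) (f : X → ℝ) (y : Y) : ℝ :=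
  (∑ x, w x y * f x) / b y

noncomputable def condExpNormSq (b : Y → ℝ) (w : X → Y → ℝ) (f : X → ℝ) : ℝ :=
  ∑ y, (∑ x, w x y * f x) ^ 2 / b y

lemma condExpNormSq_const_mul (t : ℝ) (f : X → ℝ) :
    condExpNormSq b w (fun x => t * f x) = t ^ 2 * condExpNormSq b w f := by
  simp only [condExpNormSq, mul_left_comm _ t, ← mul_sum, mul_pow, mul_div_assoc]

lemma sum_mul_condExp_sq (hb : ∀ y, b y ≠ 0) (f : X → ℝ) :
    ∑ y, b y * condExp b w f y ^ 2 = condExpNormSq b w f :=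
  sum_congr rfl fun y _ => by
    rw [condExp, div_pow, mul_div_assoc', sq (b y), mul_div_mul_left _ _ (hb y)]

lemma sum_mul_condExp (ha : ∀ x, ∑ y, w x y = a x) (hb : ∀ y, b y ≠ 0) (f : X → ℝ) :
    ∑ y, b y * condExp b w f y = ∑ x, a x * f x := by
  simp only [condExp, mul_div_cancel₀ _ (hb _)]
  rw [sum_comm]
  simp only [← sum_mul, ha]

lemma sum_sum_mul_eq_sum_mul_condExp (hb : ∀ y, b y ≠ 0) (f : X → ℝ) (g : Y → ℝ) :
    ∑ x, ∑ y, w x y * f x * g y = ∑ y, b y * condExp b w f y * g y := by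
  simp only [condExp, mul_div_cancel₀ _ (hb _), sum_mul]
  exact sum_comm

lemma sq_corr_le_condExpNormSq_mul (hb : ∀ y, 0 < b y) (f : X → ℝ) (g : Y → ℝ) :
    (∑ x, ∑ y, w x y * f x * g y) ^ 2 ≤ condExpNormSq b w f * ∑ y, b y * g y ^ 2 := by
  rw [sum_sum_mul_eq_sum_mul_condExp (fun y => (hb y).ne'),
    ← sum_mul_condExp_sq (fun y => (hb y).ne')]
  exact sq_sum_mul_mul_le (fun y => (hb y).le) _ _

lemma condExpNormSq_le (hw : ∀ x y, 0 ≤ w x y) (ha : ∀ x, ∑ y, w x y = a x)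
    (hb : ∀ y, ∑ x, w x y = b y) (hb0 : ∀ y, 0 < b y) (f : X → ℝ) :
    condExpNormSq b w f ≤ ∑ x, a x * f x ^ 2 :=
  calc condExpNormSq b w f ≤ ∑ y, ∑ x, w x y * f x ^ 2 := sum_le_sum fun y _ => by
        rw [div_le_iff₀ (hb0 y), ← hb y, mul_comm]
        simpa using sq_sum_mul_mul_le (fun x => hw x y) (fun _ => 1) f
    _ = ∑ x, a x * f x ^ 2 := by
        rw [sum_comm]
        simp only [← sum_mul, ha]

lemma sq_corr_le (hw : ∀ x y, 0 ≤ w x y) (ha : ∀ x, ∑ y, w x y = a x)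
    (hb : ∀ y, ∑ x, w x y = b y) (hb0 : ∀ y, 0 < b y) (f : X → ℝ) (g : Y → ℝ) :
    (∑ x, ∑ y, w x y * f x * g y) ^ 2 ≤ (∑ x, a x * f x ^ 2) * ∑ y, b y * g y ^ 2 :=
  (sq_corr_le_condExpNormSq_mul hb0 f g).trans <| mul_le_mul_of_nonneg_right
    (condExpNormSq_le hw ha hb hb0 f) (sum_nonneg fun y _ => mul_nonneg (hb0 y).le (sq_nonneg _))

lemma bddAbove_correlations (hw : ∀ x y, 0 ≤ w x y) (ha : ∀ x, ∑ y, w x y = a x)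
    (hb : ∀ y, ∑ x, w x y = b y) (hb0 : ∀ y, 0 < b y) : BddAbove (correlations a b w) := by
  refine ⟨1, ?_⟩
  rintro _ ⟨f, g, -, hf, -, hg, rfl⟩
  have h := sq_corr_le hw ha hb hb0 f g
  rw [hf, hg, one_mul, sq_le_one_iff_abs_le_one] at h
  exact (abs_le.mp h).2

/-- Correlations come in pairs `±c` (replace `g` by `-g`). -/
lemma sSup_correlations_nonneg : 0 ≤ sSup (correlations a b w) := by
  rcases (correlations a b w).eq_empty_or_nonempty with h | ⟨_, f, g, hf, hf2, hg, hg2, rfl⟩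
  · simp [h]
  refine Real.sSup_nonneg' ?_
  rcases le_total 0 (∑ x, ∑ y, w x y * f x * g y) with h | h
  · exact ⟨_, ⟨f, g, hf, hf2, hg, hg2, rfl⟩, h⟩
  · refine ⟨_, ⟨f, fun y => -g y, hf, hf2, ?_, ?_, rfl⟩, ?_⟩
    · simp [hg]
    · simpa using hg2
    · simpa using h

lemma corr_le_sSup_mul_sqrt (hw : ∀ x y, 0 ≤ w x y) (ha : ∀ x, ∑ y, w x y = a x)
    (hb : ∀ y, ∑ x, w x y = b y) (hb0 : ∀ y, 0 < b y) {f : X → ℝ} {g : Y → ℝ}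
    (hf : ∑ x, a x * f x = 0) (hg : ∑ y, b y * g y = 0) :
    ∑ x, ∑ y, w x y * f x * g y ≤
      sSup (correlations a b w) * √(∑ x, a x * f x ^ 2) * √(∑ y, b y * g y ^ 2) := by
  have hcorr := sq_corr_le hw ha hb hb0 f g
  set A := ∑ x, a x * f x ^ 2
  set B := ∑ y, b y * g y ^ 2
  by_cases hAB : A = 0 ∨ B = 0
  · have h0 : ∑ x, ∑ y, w x y * f x * g y = 0 := by
      refine (pow_eq_zero_iff two_ne_zero).mp (le_antisymm ?_ (sq_nonneg _))
      rcases hAB with h | h <;> simpa [h] using hcorr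
    rcases hAB with h | h <;> simp [h, h0]
  rw [not_or] at hAB
  have ha0 : ∀ x, 0 ≤ a x := fun x => ha x ▸ sum_nonneg fun y _ => hw x y
  have hA : 0 < A := (sum_nonneg fun x _ => mul_nonneg (ha0 x) (sq_nonneg _)).lt_of_ne' hAB.1
  have hB : 0 < B := (sum_nonneg fun y _ => mul_nonneg (hb0 y).le (sq_nonneg _)).lt_of_ne' hAB.2
  have hmem : (∑ x, ∑ y, w x y * f x * g y) / (√A * √B) ∈ correlations a b w := by
    refine ⟨fun x => f x / √A, fun y => g y / √B, ?_, ?_, ?_, ?_, ?_⟩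
    · simp only [mul_div_assoc', ← sum_div, hf, zero_div]
    · simp only [div_pow, Real.sq_sqrt hA.le, mul_div_assoc', ← sum_div]
      exact div_self hA.ne'
    · simp only [mul_div_assoc', ← sum_div, hg, zero_div]
    · simp only [div_pow, Real.sq_sqrt hB.le, mul_div_assoc', ← sum_div]
      exact div_self hB.ne'
    · simp only [sum_div]
      exact sum_congr rfl fun x _ => sum_congr rfl fun y _ => by ring
  have h := le_csSup (bddAbove_correlations hw ha hb hb0) hmem
  rwa [div_le_iff₀ (by positivity), ← mul_assoc] at h

lemma condExpNormSq_le_sSup_sq_mul (hw : ∀ x y, 0 ≤ w x y) (ha : ∀ x, ∑ y, w x y = a x)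
    (hb : ∀ y, ∑ x, w x y = b y) (hb0 : ∀ y, 0 < b y) {f : X → ℝ}
    (hf : ∑ x, a x * f x = 0) :
    condExpNormSq b w f ≤ sSup (correlations a b w) ^ 2 * ∑ x, a x * f x ^ 2 := by
  have hb' : ∀ y, b y ≠ 0 := fun y => (hb0 y).ne'
  have hu : ∑ y, b y * condExp b w f y = 0 := (sum_mul_condExp ha hb' f).trans hf
  have hcorr : ∑ x, ∑ y, w x y * f x * condExp b w f y = condExpNormSq b w f := by
    rw [sum_sum_mul_eq_sum_mul_condExp hb', ← sum_mul_condExp_sq hb']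
    simp only [sq, mul_assoc]
  have key := corr_le_sSup_mul_sqrt hw ha hb hb0 hf hu
  rw [hcorr, sum_mul_condExp_sq hb'] at key
  have hE : 0 ≤ condExpNormSq b w f :=
    sum_nonneg fun y _ => div_nonneg (sq_nonneg _) (hb0 y).le
  have hA : 0 ≤ ∑ x, a x * f x ^ 2 := (condExpNormSq_le hw ha hb hb0 f).trans' hE
  set e := √(condExpNormSq b w f)
  set r := sSup (correlations a b w) * √(∑ x, a x * f x ^ 2)
  have he : e ^ 2 = condExpNormSq b w f := Real.sq_sqrt hE
  have hr : r ^ 2 = sSup (correlations a b w) ^ 2 * ∑ x, a x * f x ^ 2 := by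
    rw [mul_pow, Real.sq_sqrt hA]
  rw [← he] at key ⊢
  rw [← hr]
  nlinarith [sq_nonneg (r - e), Real.sqrt_nonneg (condExpNormSq b w f)]

end Correlation

section Markov

variable {X Y Z : Type*} (p : X → Y → ℝ) (q : X → Z → ℝ)

lemma pX_pos [Fintype Y] [Nonempty Y] (hp : ∀ x y, 0 < p x y) (x : X) : 0 < pX p x :=
  sum_pos (fun y _ => hp x y) univ_nonempty

lemma pYZ_pos [Fintype X] [Nonempty X] (hp : ∀ x y, 0 < p x y) (hq : ∀ x z, 0 < q x z)
    (y : Y) (z : Z) : 0 < pYZ p q y z :=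
  sum_pos (fun x _ => mul_pos (hp x y) (hq x z)) univ_nonempty

variable [Fintype X] [Fintype Y]

lemma pZ_pos [Nonempty X] [Nonempty Y] (hp : ∀ x y, 0 < p x y) (hq : ∀ x z, 0 < q x z) (z : Z) :
    0 < pZ p q z :=
  sum_pos (fun x _ => mul_pos (pX_pos p hp x) (hq x z)) univ_nonempty

lemma pXgZ_pos [Nonempty X] [Nonempty Y] (hp : ∀ x y, 0 < p x y) (hq : ∀ x z, 0 < q x z)
    (x : X) (z : Z) : 0 < pXgZ p q x z :=
  div_pos (mul_pos (pX_pos p hp x) (hq x z)) (pZ_pos p q hp hq z)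

lemma pYgZ_pos [Nonempty X] [Nonempty Y] (hp : ∀ x y, 0 < p x y) (hq : ∀ x z, 0 < q x z)
    (y : Y) (z : Z) : 0 < pYgZ p q y z :=
  div_pos (pYZ_pos p q hp hq y z) (pZ_pos p q hp hq z)

lemma pXYgZ_pos [Nonempty X] [Nonempty Y] (hp : ∀ x y, 0 < p x y) (hq : ∀ x z, 0 < q x z)
    (x : X) (y : Y) (z : Z) : 0 < pXYgZ p q x y z :=
  div_pos (mul_pos (hp x y) (hq x z)) (pZ_pos p q hp hq z)

lemma sum_pXYgZ_right (x : X) (z : Z) : ∑ y, pXYgZ p q x y z = pXgZ p q x z := by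
  simp only [pXYgZ, pXgZ, pX, ← sum_div, ← sum_mul]

lemma sum_pXYgZ_left (y : Y) (z : Z) : ∑ x, pXYgZ p q x y z = pYgZ p q y z := by
  simp only [pXYgZ, pYgZ, pYZ, ← sum_div]

lemma rhoM_eq_sSup_correlations (z : Z) :
    rhoM p q z = sSup (correlations (pXgZ p q · z) (pYgZ p q · z) (pXYgZ p q · · z)) :=
  rfl

lemma condExpNormSq_le_rhoM_sq_mul [Nonempty X] [Nonempty Y] (hp : ∀ x y, 0 < p x y)
    (hq : ∀ x z, 0 < q x z) (z : Z) {f : X → ℝ} (hf : ∑ x, pXgZ p q x z * f x = 0) :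
    condExpNormSq (pYgZ p q · z) (pXYgZ p q · · z) f ≤
      rhoM p q z ^ 2 * ∑ x, pXgZ p q x z * f x ^ 2 :=
  condExpNormSq_le_sSup_sq_mul (fun x y => (pXYgZ_pos p q hp hq x y z).le)
    (sum_pXYgZ_right p q · z) (sum_pXYgZ_left p q · z) (pYgZ_pos p q hp hq · z) hf

lemma sum_pX_mul_q_mul {z : Z} (hz : pZ p q z ≠ 0) (f : X → ℝ) :
    ∑ x, pX p x * q x z * f x = pZ p q z * ∑ x, pXgZ p q x z * f x := by
  simp only [pXgZ, mul_sum, ← mul_assoc, mul_div_cancel₀ _ hz]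

variable [Fintype Z]

lemma termA_eq_sum (hpZ : ∀ z, pZ p q z ≠ 0) (F : X → Z → ℝ) :
    termA p q F = ∑ z, pZ p q z * ∑ x, pXgZ p q x z * F x z ^ 2 := by
  rw [termA, sum_comm]
  exact sum_congr rfl fun z _ => sum_pX_mul_q_mul p q (hpZ z) _

lemma termB_eq_sum (hpZ : ∀ z, pZ p q z ≠ 0) (F : X → Z → ℝ) :
    termB p q F =
      ∑ z, pZ p q z * condExpNormSq (pYgZ p q · z) (pXYgZ p q · · z) (F · z) := by
  rw [termB, sum_comm]
  refine sum_congr rfl fun z _ => ?_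
  rw [condExpNormSq, mul_sum]
  refine sum_congr rfl fun y _ => ?_
  have hpYZ : pYZ p q y z = pZ p q z * pYgZ p q y z := (mul_div_cancel₀ _ (hpZ z)).symm
  have hsum : ∑ x, p x y * q x z * F x z = pZ p q z * ∑ x, pXYgZ p q x y z * F x z := by
    simp only [pXYgZ, mul_sum, ← mul_assoc, mul_div_cancel₀ _ (hpZ z)]
  rw [hsum, hpYZ, mul_pow, sq, mul_assoc, mul_div_mul_left _ _ (hpZ z), mul_div_assoc]

lemma termB_nonneg [Nonempty X] (hp : ∀ x y, 0 < p x y) (hq : ∀ x z, 0 < q x z)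
    (F : X → Z → ℝ) : 0 ≤ termB p q F :=
  sum_nonneg fun y _ => sum_nonneg fun z _ => div_nonneg (sq_nonneg _) (pYZ_pos p q hp hq y z).le

lemma termB_le_iSup_mul_termA [Nonempty X] [Nonempty Y] (hp : ∀ x y, 0 < p x y)
    (hq : ∀ x z, 0 < q x z) {F : X → Z → ℝ} (hF : ∀ z, ∑ x, pX p x * q x z * F x z = 0) :
    termB p q F ≤ (⨆ z, rhoM p q z ^ 2) * termA p q F := by
  have hpZ := fun z => (pZ_pos p q hp hq z).ne'
  rw [termB_eq_sum p q hpZ, termA_eq_sum p q hpZ, mul_sum]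
  refine sum_le_sum fun z _ => ?_
  have hFz : ∑ x, pXgZ p q x z * F x z = 0 := by
    simpa [sum_pX_mul_q_mul p q (hpZ z), hpZ z] using hF z
  have hA : 0 ≤ ∑ x, pXgZ p q x z * F x z ^ 2 :=
    sum_nonneg fun x _ => mul_nonneg (pXgZ_pos p q hp hq x z).le (sq_nonneg _)
  have hρ : rhoM p q z ^ 2 ≤ ⨆ z, rhoM p q z ^ 2 :=
    le_ciSup (f := fun z => rhoM p q z ^ 2) (Set.finite_range _).bddAbove z
  calc pZ p q z * condExpNormSq (pYgZ p q · z) (pXYgZ p q · · z) (F · z)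
      ≤ pZ p q z * (rhoM p q z ^ 2 * ∑ x, pXgZ p q x z * F x z ^ 2) :=
        mul_le_mul_of_nonneg_left (condExpNormSq_le_rhoM_sq_mul p q hp hq z hFz)
          (pZ_pos p q hp hq z).le
    _ ≤ pZ p q z * ((⨆ z, rhoM p q z ^ 2) * ∑ x, pXgZ p q x z * F x z ^ 2) :=
        mul_le_mul_of_nonneg_left (mul_le_mul_of_nonneg_right hρ hA) (pZ_pos p q hp hq z).le
    _ = (⨆ z, rhoM p q z ^ 2) * (pZ p q z * ∑ x, pXgZ p q x z * F x z ^ 2) := by ring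

/-- `F` is `f / √p(z)` on the slice `z` and vanishes elsewhere. -/
lemma exists_sq_le_termB [Nonempty X] [Nonempty Y] (hp : ∀ x y, 0 < p x y)
    (hq : ∀ x z, 0 < q x z) {z : Z} {c : ℝ}
    (hc : c ∈ correlations (pXgZ p q · z) (pYgZ p q · z) (pXYgZ p q · · z)) :
    ∃ F : X → Z → ℝ, (∀ z, ∑ x, pX p x * q x z * F x z = 0) ∧ termA p q F = 1 ∧
      c ^ 2 ≤ termB p q F := by
  classical
  obtain ⟨f, g, hf, hf2, -, hg2, rfl⟩ := hc
  simp only at hf hf2 hg2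
  have hpZ := fun z => (pZ_pos p q hp hq z).ne'
  set t := (√(pZ p q z))⁻¹
  have ht : pZ p q z * t ^ 2 = 1 := by
    rw [inv_pow, Real.sq_sqrt (pZ_pos p q hp hq z).le, mul_inv_cancel₀ (hpZ z)]
  refine ⟨fun x z' => if z' = z then t * f x else 0, fun z' => ?_, ?_, ?_⟩
  · rw [sum_pX_mul_q_mul p q (hpZ z')]
    by_cases h : z' = z
    · subst h
      simp [mul_left_comm _ t, ← mul_sum, hf]
    · simp [h]
  · rw [termA_eq_sum p q hpZ, Fintype.sum_eq_single z fun z' h => by simp [h]]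
    simp only [↓reduceIte, mul_pow, mul_left_comm _ (t ^ 2)]
    rw [← mul_sum, ← mul_assoc, ht, hf2, one_mul]
  · rw [termB_eq_sum p q hpZ, Fintype.sum_eq_single z fun z' h => by simp [h, condExpNormSq]]
    simp only [↓reduceIte, condExpNormSq_const_mul, ← mul_assoc, ht, one_mul]
    simpa [hg2] using sq_corr_le_condExpNormSq_mul (pYgZ_pos p q hp hq · z) f g

end Markov

theorem rhoS2_eq_sup_rhoM_general [Nontrivial X] [Nontrivial Y]
    (p : X → Y → ℝ) (q : X → Z → ℝ)
    (hp : ∀ x y, 0 < p x y)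
    (hq : ∀ x z, 0 < q x z) :
    rhoS2 p q = ⨆ z : Z, rhoM p q z ^ 2 := by
  set M := ⨆ z : Z, rhoM p q z ^ 2
  have hM : M ∈ upperBounds {b : ℝ | ∃ F : X → Z → ℝ,
      (∀ z, ∑ x, pX p x * q x z * F x z = 0) ∧ termA p q F = 1 ∧ b = termB p q F} := by
    rintro _ ⟨F, hF, hA, rfl⟩
    simpa [hA] using termB_le_iSup_mul_termA p q hp hq hF
  have hS : 0 ≤ rhoS2 p q := Real.sSup_nonneg <| by
    rintro _ ⟨F, -, -, rfl⟩
    exact termB_nonneg p q hp hq F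
  refine le_antisymm (Real.sSup_le hM (Real.iSup_nonneg fun z => sq_nonneg _))
    (Real.iSup_le (fun z => ?_) hS)
  rw [rhoM_eq_sSup_correlations]
  refine sSup_sq_le_of_forall_sq_le sSup_correlations_nonneg hS fun c hc => ?_
  obtain ⟨F, hF, hA, hc⟩ := exists_sq_le_termB p q hp hq hc
  exact hc.trans (le_csSup ⟨M, hM⟩ ⟨F, hF, hA, rfl⟩)

/-- Theorem 2(ii): ρ_s² equals the maximum over z of ρ_m(X,Y|Z=z)². -/
theorem rhoS2_eq_sup_rhoM [Nontrivial X] [Nontrivial Y] [Nonempty Z]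
    (p : X → Y → ℝ) (q : X → Z → ℝ)
    (hp : ∀ x y, 0 < p x y) (hpsum : ∑ x, ∑ y, p x y = 1)
    (hq : ∀ x z, 0 < q x z) (hqsum : ∀ x, ∑ z, q x z = 1) :
    rhoS2 p q = ⨆ z : Z, rhoM p q z ^ 2 :=
  rhoS2_eq_sup_rhoM_general p q hp hq
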